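/- arXiv:2106.07706 — 7 statements merged into one kernel-verified Lean document; each statement's English description precedes it below -/
import Mathlib

section
/- For every real α > 3 and every b ∈ ℝ, if γ ≥ 0 satisfies F_α(γ) = Φ(b), then γ ≤ 2α + b². (Equivalently, the Gamma quantile transform h(b;α) = F_α⁻¹(Φ(b)) of the standard normal CDF satisfies h(b;α) ≤ 2α + b² for all α > 3 and b ∈ ℝ.) -/
/-- The Gamma(α,1) cumulative distribution function
`F_α(γ) = Γ(α)⁻¹ ∫₀^γ t^(α−1) e^(−t) dt`. -/
noncomputable def gammaCDF (α γ : ℝ) : ℝ :=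
  (Real.Gamma α)⁻¹ * ∫ t in Set.Ioc (0 : ℝ) γ, t ^ (α - 1) * Real.exp (-t)

/-- The standard normal cumulative distribution function
`Φ(b) = (2π)^(−1/2) ∫_{−∞}^b e^(−t²/2) dt`. -/
noncomputable def stdNormalCDF (b : ℝ) : ℝ :=
  (Real.sqrt (2 * Real.pi))⁻¹ * ∫ t in Set.Iic b, Real.exp (-t ^ 2 / 2)

/-!
Substituting `t = 2α + s²` turns the Gamma tail beyond `2α + b²` (for `b ≥ 0`) into
`∫_b^∞ 2s (2α + s²)^(α-1) e^(-(2α + s²)) ds`. Using `log (1 + u) ≤ u` and maximising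
`2s e^(-s²/(2α))` at `s = √α`, this integrand is at most `Γ(α) e^(-s²/2) / √(2π)` as soon as
`log Γ α ≥ logGammaMinorant α`, a Stirling-type bound with an exponential margin. That bound holds
on `[3, 4]` because `Γ α ≥ Γ 3 = 2` there, and propagates along `Γ (x + 1) = x Γ x`.
So `Φ b ≤ Φ |b| ≤ F_α (2α + b²)`, and strict monotonicity of `F_α` on `[0, ∞)` gives the claim.
-/

open Real MeasureTheory Set

theorem le_log_Gamma_of_le_of_add_one_le {f : ℝ → ℝ} {a : ℝ} (ha : 0 < a)
    (hbase : ∀ x ∈ Icc a (a + 1), f x ≤ log (Gamma x))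
    (hstep : ∀ x, a ≤ x → f (x + 1) ≤ f x + log x) {x : ℝ} (hx : a ≤ x) :
    f x ≤ log (Gamma x) := by
  obtain ⟨n, hn⟩ := exists_nat_ge (x - a - 1)
  induction n generalizing x with
  | zero => exact hbase x ⟨hx, by push_cast at hn; linarith⟩
  | succ n ih =>
    rcases le_or_gt x (a + 1) with hx1 | hx1
    · exact hbase x ⟨hx, hx1⟩
    have hx' : a ≤ x - 1 := by linarith
    have hpos : 0 < x - 1 := by linarith
    calc f x = f (x - 1 + 1) := by rw [sub_add_cancel]
      _ ≤ f (x - 1) + log (x - 1) := hstep _ hx'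
      _ ≤ log (Gamma (x - 1)) + log (x - 1) := by
        gcongr; exact ih hx' (by push_cast at hn; linarith)
      _ = log (Gamma x) := by
        rw [← log_mul (Gamma_pos_of_pos hpos).ne' hpos.ne', mul_comm,
          ← Gamma_add_one hpos.ne', sub_add_cancel]

/-- The logarithm of `√(2π) e^(-1/2) · sup_s 2s e^(-s²/(2α)) · (2α)^(α-1) e^(-2α)`, which is what
`Γ α` must exceed once `(2α + s²)^(α-1) ≤ (2α)^(α-1) e^((α-1) s²/(2α))` is used; Stirling's
formula puts `log Γ α` above it by about `α (1 - log 2)`. -/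
noncomputable def logGammaMinorant (α : ℝ) : ℝ :=
  log √(2 * π) - 1 / 2 + α * log 2 + (α - 1 / 2) * log α - 2 * α

theorem log_sqrt_two_mul_pi_le_one : log √(2 * π) ≤ 1 := by
  rw [log_sqrt (by positivity), div_le_one two_pos, log_le_iff_le_exp (by positivity)]
  have h2 : exp 2 = exp 1 ^ 2 := by rw [← exp_nat_mul]; norm_num
  nlinarith [pi_lt_d2, exp_one_gt_d9]

theorem logGammaMinorant_le_log_two {α : ℝ} (hα : α ∈ Icc (3 : ℝ) 4) :
    logGammaMinorant α ≤ log 2 := by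
  obtain ⟨h3, h4⟩ := hα
  have hlogα : log α ≤ 2 * log 2 := by
    calc log α ≤ log 4 := log_le_log (by linarith) h4
      _ = 2 * log 2 := by rw [show (4 : ℝ) = 2 ^ 2 by norm_num, log_pow]; norm_num
  have := log_sqrt_two_mul_pi_le_one
  have := log_two_lt_d9
  unfold logGammaMinorant
  nlinarith [mul_le_mul_of_nonneg_left hlogα (show 0 ≤ α - 1 / 2 by linarith)]

theorem logGammaMinorant_add_one_le {α : ℝ} (hα : 3 ≤ α) :
    logGammaMinorant (α + 1) ≤ logGammaMinorant α + log α := by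
  have hα0 : 0 < α := by linarith
  have hratio : log (α + 1) - log α ≤ 1 / α := by
    rw [← log_div (by linarith) hα0.ne']
    linarith [log_le_sub_one_of_pos (show 0 < (α + 1) / α by positivity),
      show (α + 1) / α - 1 = 1 / α by field_simp; ring]
  have hcoef : (α + 1 / 2) * (1 / α) ≤ 7 / 6 := by
    rw [mul_one_div, div_le_iff₀ hα0]; linarith
  have := log_two_lt_d9
  unfold logGammaMinorant
  nlinarith [mul_le_mul_of_nonneg_left hratio (show 0 ≤ α + 1 / 2 by linarith)]

theorem logGammaMinorant_le_log_Gamma {α : ℝ} (hα : 3 ≤ α) :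
    logGammaMinorant α ≤ log (Gamma α) := by
  refine le_log_Gamma_of_le_of_add_one_le (by norm_num : (0 : ℝ) < 3) (fun x hx => ?_)
    (fun x hx => logGammaMinorant_add_one_le hx) hα
  have hΓ3 : Gamma 3 = 2 := by
    rw [show (3 : ℝ) = 2 + 1 by norm_num, Gamma_add_one two_ne_zero, Gamma_two, mul_one]
  calc logGammaMinorant x ≤ log (Gamma 3) :=
        hΓ3 ▸ logGammaMinorant_le_log_two ⟨hx.1, by linarith [hx.2]⟩
    _ ≤ log (Gamma x) := log_le_log (Gamma_pos_of_pos (by norm_num))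
        (Gamma_strictMonoOn_Ici.monotoneOn (by norm_num) (mem_Ici.2 (by linarith [hx.1])) hx.1)

theorem log_le_half_log_add_sq_div {α s : ℝ} (hα : 0 < α) (hs : 0 < s) :
    log s ≤ log α / 2 + s ^ 2 / (2 * α) - 1 / 2 := by
  have h := log_le_sub_one_of_pos (show 0 < s ^ 2 / α by positivity)
  rw [log_div (by positivity) hα.ne', log_pow] at h
  have : s ^ 2 / α = 2 * (s ^ 2 / (2 * α)) := by field_simp
  push_cast at h
  linarith

theorem log_add_sq_le {c s : ℝ} (hc : 0 < c) :
    log (c + s ^ 2) ≤ log c + s ^ 2 / c := by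
  have h := log_le_sub_one_of_pos (show 0 < (c + s ^ 2) / c by positivity)
  rw [log_div (by positivity) hc.ne'] at h
  have : (c + s ^ 2) / c - 1 = s ^ 2 / c := by field_simp; ring
  linarith

theorem rpow_add_sq_mul_exp_neg_le_Gamma_mul_gaussian {α s : ℝ} (hα : 3 ≤ α) (hs : 0 < s) :
    2 * s * ((2 * α + s ^ 2) ^ (α - 1) * exp (-(2 * α + s ^ 2)))
      ≤ Gamma α * (√(2 * π))⁻¹ * exp (-s ^ 2 / 2) := by
  have hα0 : 0 < α := by linarith
  have hΓ := Gamma_pos_of_pos hα0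
  have hL : log (2 * s * ((2 * α + s ^ 2) ^ (α - 1) * exp (-(2 * α + s ^ 2))))
      = log 2 + log s + (α - 1) * log (2 * α + s ^ 2) - (2 * α + s ^ 2) := by
    rw [log_mul (by positivity) (by positivity), log_mul two_ne_zero hs.ne',
      log_mul (by positivity) (exp_pos _).ne', log_rpow (by positivity), log_exp]
    ring
  have hR : log (Gamma α * (√(2 * π))⁻¹ * exp (-s ^ 2 / 2))
      = log (Gamma α) - log √(2 * π) - s ^ 2 / 2 := by
    rw [log_mul (by positivity) (exp_pos _).ne', log_mul hΓ.ne' (by positivity), log_inv, log_exp]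
    ring
  rw [← log_le_log_iff (by positivity) (by positivity), hL, hR]
  have hmul := mul_le_mul_of_nonneg_left (log_add_sq_le (s := s) (by positivity : 0 < 2 * α))
    (show 0 ≤ α - 1 by linarith)
  have hlog2α : log (2 * α) = log 2 + log α := log_mul two_ne_zero hα0.ne'
  have hsq : (α - 1) * (s ^ 2 / (2 * α)) + s ^ 2 / (2 * α) = s ^ 2 / 2 := by field_simp; ring
  have := log_le_half_log_add_sq_div hα0 hs
  have := logGammaMinorant_le_log_Gamma hα
  unfold logGammaMinorant at this
  nlinarith

theorem integral_Ioi_add_sq {E : Type*} [NormedAddCommGroup E] [NormedSpace ℝ E]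
    (c : ℝ) {b : ℝ} (hb : 0 ≤ b) (g : ℝ → E) :
    ∫ t in Ioi (c + b ^ 2), g t = ∫ s in Ioi b, (2 * s) • g (c + s ^ 2) := by
  have himage : (fun s => c + s ^ 2) '' Ioi b = Ioi (c + b ^ 2) := by
    ext t
    simp only [mem_image, mem_Ioi]
    constructor
    · rintro ⟨s, hs, rfl⟩
      nlinarith
    · intro ht
      refine ⟨√(t - c), ?_, by rw [sq_sqrt (by nlinarith)]; ring⟩
      rw [← sqrt_sq hb]
      exact sqrt_lt_sqrt (sq_nonneg b) (by linarith)
  have hinj : InjOn (fun s => c + s ^ 2) (Ioi b) := fun s hs t ht hst => by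
    simp only [mem_Ioi] at hs ht
    nlinarith
  have hderiv (s : ℝ) : HasDerivAt (fun s => c + s ^ 2) (2 * s) s := by
    simpa using (hasDerivAt_pow 2 s).const_add c
  rw [← himage, integral_image_eq_integral_abs_deriv_smul measurableSet_Ioi
    (fun s _ => (hderiv s).hasDerivWithinAt) hinj]
  refine setIntegral_congr_fun measurableSet_Ioi fun s hs => ?_
  simp only [mem_Ioi] at hs
  rw [abs_of_nonneg (by linarith)]

theorem integral_exp_neg_sq_div_two : ∫ t : ℝ, exp (-t ^ 2 / 2) = √(2 * π) := by
  convert integral_gaussian (1 / 2) using 2 <;> ring_nf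

theorem integrable_exp_neg_sq_div_two : Integrable fun t : ℝ => exp (-t ^ 2 / 2) := by
  convert integrable_exp_neg_mul_sq (by norm_num : (0 : ℝ) < 1 / 2) using 2; ring_nf

theorem stdNormalCDF_eq_one_sub (b : ℝ) :
    stdNormalCDF b = 1 - (√(2 * π))⁻¹ * ∫ t in Ioi b, exp (-t ^ 2 / 2) := by
  have h := integral_add_compl measurableSet_Ioi (s := Ioi b) integrable_exp_neg_sq_div_two
  rw [compl_Ioi, integral_exp_neg_sq_div_two] at h
  rw [stdNormalCDF, eq_sub_of_add_eq' h, mul_sub, inv_mul_cancel₀ (by positivity)]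

theorem stdNormalCDF_mono : Monotone stdNormalCDF := fun a b hab =>
  mul_le_mul_of_nonneg_left (setIntegral_mono_set integrable_exp_neg_sq_div_two.integrableOn
    (Filter.Eventually.of_forall fun t => (exp_pos _).le) (Iic_subset_Iic.2 hab).eventuallyLE)
    (by positivity)

theorem integrableOn_rpow_mul_exp_neg {α : ℝ} (hα : 0 < α) :
    IntegrableOn (fun t => t ^ (α - 1) * exp (-t)) (Ioi 0) := by
  simpa only [mul_comm] using GammaIntegral_convergent hα

theorem gammaCDF_eq_one_sub {α x : ℝ} (hα : 0 < α) (hx : 0 ≤ x) :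
    gammaCDF α x = 1 - (Gamma α)⁻¹ * ∫ t in Ioi x, t ^ (α - 1) * exp (-t) := by
  have h : (∫ t in Ioc 0 x, t ^ (α - 1) * exp (-t)) + ∫ t in Ioi x, t ^ (α - 1) * exp (-t)
      = Gamma α := by
    rw [Gamma_eq_integral hα, ← setIntegral_union (Ioc_disjoint_Ioi le_rfl) measurableSet_Ioi
      ((integrableOn_rpow_mul_exp_neg hα).mono_set Ioc_subset_Ioi_self)
      ((integrableOn_rpow_mul_exp_neg hα).mono_set (Ioi_subset_Ioi hx)),
      Ioc_union_Ioi_eq_Ioi hx]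
    exact setIntegral_congr_fun measurableSet_Ioi fun t _ => mul_comm _ _
  rw [gammaCDF, eq_sub_of_add_eq h, mul_sub, inv_mul_cancel₀ (Gamma_pos_of_pos hα).ne']

theorem gammaCDF_strictMonoOn {α : ℝ} (hα : 0 < α) : StrictMonoOn (gammaCDF α) (Ici 0) := by
  intro x hx y hy hxy
  have hint := integrableOn_rpow_mul_exp_neg hα
  have hpos : 0 < ∫ t in Ioc x y, t ^ (α - 1) * exp (-t) := by
    rw [← intervalIntegral.integral_of_le hxy.le]
    refine intervalIntegral.intervalIntegral_pos_of_pos_on ?_ (fun t ht => ?_) hxy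
    · exact (intervalIntegrable_iff_integrableOn_Ioc_of_le hxy.le).2
        (hint.mono_set fun t ht => lt_of_le_of_lt hx ht.1)
    · have : 0 < t := lt_of_le_of_lt hx ht.1
      positivity
  have hsplit : ∫ t in Ioc 0 y, t ^ (α - 1) * exp (-t)
      = (∫ t in Ioc 0 x, t ^ (α - 1) * exp (-t)) + ∫ t in Ioc x y, t ^ (α - 1) * exp (-t) := by
    rw [← Ioc_union_Ioc_eq_Ioc hx hxy.le, setIntegral_union (Ioc_disjoint_Ioc_of_le le_rfl)
      measurableSet_Ioc (hint.mono_set Ioc_subset_Ioi_self)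
      (hint.mono_set fun t ht => lt_of_le_of_lt hx ht.1)]
  rw [gammaCDF, gammaCDF, hsplit, mul_add, lt_add_iff_pos_right]
  exact mul_pos (inv_pos.2 (Gamma_pos_of_pos hα)) hpos

theorem gamma_tail_le_normal_tail {α b : ℝ} (hα : 3 ≤ α) (hb : 0 ≤ b) :
    (Gamma α)⁻¹ * ∫ t in Ioi (2 * α + b ^ 2), t ^ (α - 1) * exp (-t)
      ≤ (√(2 * π))⁻¹ * ∫ t in Ioi b, exp (-t ^ 2 / 2) := by
  have hΓ := Gamma_pos_of_pos (by linarith : 0 < α)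
  rw [integral_Ioi_add_sq _ hb, inv_mul_le_iff₀ hΓ, ← mul_assoc, ← integral_const_mul]
  refine integral_mono_of_nonneg ?_ (integrable_exp_neg_sq_div_two.const_mul _).integrableOn ?_
  all_goals filter_upwards [ae_restrict_mem measurableSet_Ioi] with s hs
  · have : 0 < s := lt_of_le_of_lt hb hs
    positivity
  · rw [smul_eq_mul]
    exact rpow_add_sq_mul_exp_neg_le_Gamma_mul_gaussian hα (lt_of_le_of_lt hb hs)

theorem stdNormalCDF_le_gammaCDF {α b : ℝ} (hα : 3 ≤ α) (hb : 0 ≤ b) :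
    stdNormalCDF b ≤ gammaCDF α (2 * α + b ^ 2) := by
  rw [stdNormalCDF_eq_one_sub, gammaCDF_eq_one_sub (by linarith) (by positivity)]
  linarith [gamma_tail_le_normal_tail hα hb]

/-- For every `α > 3` and `b ∈ ℝ`, if `γ ≥ 0` satisfies `F_α(γ) = Φ(b)`,
then `γ ≤ 2α + b²`. -/
theorem gamma_quantile_le (α b γ : ℝ) (hα : 3 < α) (hγ : 0 ≤ γ)
    (h : gammaCDF α γ = stdNormalCDF b) :
    γ ≤ 2 * α + b ^ 2 := by
  have hle : gammaCDF α γ ≤ gammaCDF α (2 * α + |b| ^ 2) :=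
    h ▸ (stdNormalCDF_mono (le_abs_self b)).trans (stdNormalCDF_le_gammaCDF hα.le (abs_nonneg b))
  rw [sq_abs] at hle
  exact ((gammaCDF_strictMonoOn (by linarith)).le_iff_le hγ (mem_Ici.2 (by positivity))).1 hle
end

section
/- For every real α > 3, one has F_α(2α) > F_3(6) = 1 − 25 e^{−6}; equivalently, P_α := F_α(2α) − 1/2 > 1/2 − 25 e^{−6} ≈ 0.438 for all α > 3. -/
open Real MeasureTheory Set

lemma ConcaveOn.secant_le {f : ℝ → ℝ} {s : Set ℝ} (hf : ConcaveOn ℝ s f) {a b x : ℝ}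
    (ha : a ∈ s) (hb : b ∈ s) (hab : a < b) (hx : x ∈ Icc a b) :
    ((b - x) * f a + (x - a) * f b) / (b - a) ≤ f x := by
  have hba : 0 < b - a := sub_pos.2 hab
  have key := hf.2 ha hb (div_nonneg (sub_nonneg.2 hx.2) hba.le)
    (div_nonneg (sub_nonneg.2 hx.1) hba.le) (by field_simp; ring)
  have hcomb : (b - x) / (b - a) * a + (x - a) / (b - a) * b = x := by
    field_simp; ring
  simp only [smul_eq_mul, hcomb] at key
  calc _ = (b - x) / (b - a) * f a + (x - a) / (b - a) * f b := by ring
    _ ≤ f x := key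

noncomputable def gammaKernel (α c s : ℝ) : ℝ := s ^ (α - 1) * exp (-(c * s))

lemma gammaKernel_nonneg {α c s : ℝ} (hs : 0 ≤ s) : 0 ≤ gammaKernel α c s :=
  mul_nonneg (rpow_nonneg hs _) (exp_pos _).le

lemma integrableOn_gammaKernel {α c : ℝ} (hα : 0 < α) (hc : 0 < c) :
    IntegrableOn (gammaKernel α c) (Ioi 0) :=
  (integrableOn_rpow_mul_exp_neg_mul_rpow (s := α - 1) (by linarith) one_pos hc).congr_fun
    (fun s _ => by simp [gammaKernel]) measurableSet_Ioi

lemma integral_Ioc_mul_eq_rpow_mul {α c x : ℝ} (hc : 0 < c) (hx : 0 ≤ x) :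
    ∫ t in Ioc 0 (c * x), t ^ (α - 1) * exp (-t) = c ^ α * ∫ s in Ioc 0 x, gammaKernel α c s := by
  have hsub := intervalIntegral.smul_integral_comp_mul_left (a := 0) (b := x)
    (fun t => t ^ (α - 1) * exp (-t)) c
  rw [mul_zero, smul_eq_mul] at hsub
  rw [← intervalIntegral.integral_of_le (by positivity), ← hsub,
    ← intervalIntegral.integral_of_le hx, ← intervalIntegral.integral_const_mul,
    ← intervalIntegral.integral_const_mul]
  refine intervalIntegral.integral_congr fun s hs => ?_
  rw [uIcc_of_le hx] at hs
  simp only [gammaKernel, mul_rpow hc.le hs.1, rpow_sub_one hc.ne']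
  field_simp

lemma integral_Ioc_add_integral_Ioi_gammaKernel {α c x : ℝ} (hα : 0 < α) (hc : 0 < c)
    (hx : 0 ≤ x) :
    (∫ s in Ioc 0 x, gammaKernel α c s) + ∫ s in Ioi x, gammaKernel α c s
      = (c ^ α)⁻¹ * Gamma α := by
  have hk := integrableOn_gammaKernel hα hc
  rw [← setIntegral_union Ioc_disjoint_Ioi_same measurableSet_Ioi
    (hk.mono_set Ioc_subset_Ioi_self) (hk.mono_set (Ioi_subset_Ioi hx)),
    Ioc_union_Ioi_eq_Ioi hx, ← inv_rpow hc.le, ← one_div]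
  exact integral_rpow_mul_exp_neg_mul_Ioi hα hc

lemma gammaCDF_mul_eq_div {α c x : ℝ} (hα : 0 < α) (hc : 0 < c) (hx : 0 ≤ x) :
    gammaCDF α (c * x) = (∫ s in Ioc 0 x, gammaKernel α c s) /
      ((∫ s in Ioc 0 x, gammaKernel α c s) + ∫ s in Ioi x, gammaKernel α c s) := by
  have hΓ := (Gamma_pos_of_pos hα).ne'
  have hcα := (rpow_pos_of_pos hc α).ne'
  rw [gammaCDF, integral_Ioc_mul_eq_rpow_mul hc hx,
    integral_Ioc_add_integral_Ioi_gammaKernel hα hc hx]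
  field_simp

lemma gammaKernel_three_one (s : ℝ) : gammaKernel 3 1 s = s ^ 2 * exp (-s) := by
  norm_num [gammaKernel]

noncomputable def gammaTilt (s : ℝ) : ℝ := log s - s / 3

lemma gammaKernel_div_three {α s : ℝ} (hs : 0 < s) :
    gammaKernel α (α / 3) s = gammaKernel 3 1 s * exp ((α - 3) * gammaTilt s) := by
  simp only [gammaKernel, gammaTilt, rpow_def_of_pos hs, ← exp_add]
  ring_nf

lemma antitoneOn_gammaTilt : AntitoneOn gammaTilt (Ici 3) := by
  intro a ha b _ hab
  have ha0 : 0 < a := by linarith [mem_Ici.1 ha]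
  have hb0 : 0 < b := by linarith
  have hlog : log b - log a ≤ b / a - 1 := by
    rw [← log_div (by linarith) ha0.ne']
    exact log_le_sub_one_of_pos (by positivity)
  have : b / a - 1 ≤ (b - a) / 3 := by
    rw [div_sub_one ha0.ne']
    exact div_le_div_of_nonneg_left (by linarith) (by norm_num) ha
  simp only [gammaTilt]
  linarith

/-- With `p s = A s³ + B s² + C s + D`, this is `-(p + p' + p'' + p''') s * exp (-s)`,
a primitive of `p s * exp (-s)`. -/
noncomputable def cubicExpPrimitive (A B C D s : ℝ) : ℝ :=
  -((A * s ^ 3 + (3 * A + B) * s ^ 2 + (6 * A + 2 * B + C) * s + (6 * A + 2 * B + C + D))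
    * exp (-s))

lemma hasDerivAt_cubicExpPrimitive (A B C D s : ℝ) :
    HasDerivAt (cubicExpPrimitive A B C D)
      ((A * s ^ 3 + B * s ^ 2 + C * s + D) * exp (-s)) s := by
  have h := ((((((hasDerivAt_pow 3 s).const_mul A).add
    ((hasDerivAt_pow 2 s).const_mul (3 * A + B))).add
    ((hasDerivAt_id s).const_mul (6 * A + 2 * B + C))).add_const (6 * A + 2 * B + C + D)).mul
    (hasDerivAt_neg s).exp).neg
  refine h.congr_deriv ?_
  simp only [Pi.add_apply, id]
  ring

lemma integral_cubic_mul_exp_neg (A B C D a b : ℝ) :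
    ∫ s in a..b, (A * s ^ 3 + B * s ^ 2 + C * s + D) * exp (-s)
      = cubicExpPrimitive A B C D b - cubicExpPrimitive A B C D a :=
  intervalIntegral.integral_eq_sub_of_hasDerivAt
    (fun s _ => hasDerivAt_cubicExpPrimitive A B C D s)
    (Continuous.intervalIntegrable (by fun_prop) a b)

lemma sub_le_integral_mul_exp_neg {f : ℝ → ℝ} {A B C D a b : ℝ} (hab : a ≤ b)
    (hf : IntervalIntegrable (fun s => f s * exp (-s)) volume a b)
    (h : ∀ s ∈ Ioo a b, A * s ^ 3 + B * s ^ 2 + C * s + D ≤ f s) :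
    cubicExpPrimitive A B C D b - cubicExpPrimitive A B C D a ≤ ∫ s in a..b, f s * exp (-s) := by
  rw [← integral_cubic_mul_exp_neg]
  exact intervalIntegral.integral_mono_on_of_le_Ioo hab
    (Continuous.intervalIntegrable (by fun_prop) a b) hf
    fun s hs => mul_le_mul_of_nonneg_right (h s hs) (exp_pos _).le

lemma continuous_sq_mul_gammaTilt_sub_mul_exp_neg (c : ℝ) :
    Continuous fun s => s ^ 2 * (gammaTilt s - c) * exp (-s) := by
  have h : (fun s => s ^ 2 * (gammaTilt s - c) * exp (-s))
      = fun s => (s * (s * log s) - s ^ 2 * (s / 3 + c)) * exp (-s) := by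
    funext s; simp only [gammaTilt]; ring
  rw [h]
  have := continuous_mul_log
  fun_prop

lemma log_six : log 6 = log 2 + log 3 := by
  rw [show (6 : ℝ) = 2 * 3 by norm_num, log_mul (by norm_num) (by norm_num)]

/-- A numerical fact (the integral is `≈ 0.29`): on `(0, 1]` bound `log s ≥ 1 - 1 / s`, on `[1, 3]`
and `[3, 6]` bound `log` below by its chords, and use `log 2 < 0.7`, `log 3 < 1.1`; each piece is
then a cubic times `exp (-s)`, integrated by `cubicExpPrimitive`. -/
lemma integral_sq_mul_gammaTilt_sub_pos :
    0 < ∫ s in Ioc 0 6, s ^ 2 * (gammaTilt s - gammaTilt 6) * exp (-s) := by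
  have hI (a b : ℝ) :=
    (continuous_sq_mul_gammaTilt_sub_mul_exp_neg (gammaTilt 6)).intervalIntegrable (μ := volume) a b
  have hlog := strictConcaveOn_log_Ioi.concaveOn
  have h01 := sub_le_integral_mul_exp_neg (A := -1/3) (B := 6/5) (C := -1) (D := 0)
    zero_le_one (hI 0 1) fun s ⟨hs0, _⟩ => by
      have h1 := one_sub_inv_le_log_of_pos hs0
      have h2 : s ^ 2 * (1 - s⁻¹) = s ^ 2 - s := by field_simp
      simp only [gammaTilt]
      nlinarith [mul_le_mul_of_nonneg_left h1 (sq_nonneg s), log_six, log_two_lt_d9,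
        log_three_lt_d9]
  have h13 := sub_le_integral_mul_exp_neg (A := 13/60) (B := -7/20) (C := 0) (D := 0)
    (by norm_num : (1:ℝ) ≤ 3) (hI 1 3) fun s ⟨hs1, hs3⟩ => by
      have h1 := hlog.secant_le (mem_Ioi.2 one_pos) (mem_Ioi.2 (by norm_num : (0:ℝ) < 3))
        (by norm_num) ⟨hs1.le, hs3.le⟩
      simp only [gammaTilt, log_six, log_one] at h1 ⊢
      have key : 13 / 60 * s - 7 / 20 ≤ log s - s / 3 - (log 2 + log 3 - 6 / 3) := by
        nlinarith [mul_nonneg (by linarith : (0:ℝ) ≤ 3 - s)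
          (by linarith [log_three_lt_d9] : (0:ℝ) ≤ 1.1 - log 3), log_two_lt_d9]
      nlinarith [mul_le_mul_of_nonneg_left key (sq_nonneg s)]
  have h36 := sub_le_integral_mul_exp_neg (A := -1/10) (B := 3/5) (C := 0) (D := 0)
    (by norm_num : (3:ℝ) ≤ 6) (hI 3 6) fun s ⟨hs3, hs6⟩ => by
      have h1 := hlog.secant_le (mem_Ioi.2 (by norm_num : (0:ℝ) < 3))
        (mem_Ioi.2 (by norm_num : (0:ℝ) < 6)) (by norm_num) ⟨hs3.le, hs6.le⟩
      simp only [gammaTilt, log_six] at h1 ⊢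
      have key : -1 / 10 * s + 3 / 5 ≤ log s - s / 3 - (log 2 + log 3 - 6 / 3) := by
        nlinarith [mul_nonneg (by linarith : (0:ℝ) ≤ 6 - s)
          (by linarith [log_two_lt_d9] : (0:ℝ) ≤ 0.7 - log 2)]
      nlinarith [mul_le_mul_of_nonneg_left key (sq_nonneg s)]
  rw [← intervalIntegral.integral_of_le (by norm_num),
    ← intervalIntegral.integral_add_adjacent_intervals (hI 0 1) (hI 1 6),
    ← intervalIntegral.integral_add_adjacent_intervals (hI 1 3) (hI 3 6)]
  norm_num [cubicExpPrimitive] at h01 h13 h36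
  have he1 := exp_neg_one_gt_d9
  have he3 : exp (-3) < 0.3679 ^ 3 := by
    rw [show exp (-3) = exp (-1) ^ 3 by rw [← exp_nat_mul]; norm_num]
    exact pow_lt_pow_left₀ (exp_neg_one_lt_d9.trans (by norm_num)) (exp_pos _).le (by norm_num)
  linarith [exp_pos (-6)]

lemma integral_Ioc_gammaKernel_three_one :
    ∫ s in Ioc 0 6, gammaKernel 3 1 s = 2 - 50 * exp (-6) := by
  rw [← intervalIntegral.integral_of_le (by norm_num)]
  calc _ = ∫ s in (0 : ℝ)..6, (0 * s ^ 3 + 1 * s ^ 2 + 0 * s + 0) * exp (-s) :=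
        intervalIntegral.integral_congr fun s _ => by simp [gammaKernel_three_one]
    _ = _ := by rw [integral_cubic_mul_exp_neg]; norm_num [cubicExpPrimitive]; ring

lemma exp_mul_integral_Ioc_gammaKernel_lt {α : ℝ} (hα : 3 < α) :
    exp ((α - 3) * gammaTilt 6) * ∫ s in Ioc 0 6, gammaKernel 3 1 s
      < ∫ s in Ioc 0 6, gammaKernel α (α / 3) s := by
  set β := α - 3
  set E := exp (β * gammaTilt 6)
  have hβ : 0 < β := sub_pos.2 hα
  have hk3 : IntegrableOn (gammaKernel 3 1) (Ioc 0 6) :=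
    (integrableOn_gammaKernel three_pos one_pos).mono_set Ioc_subset_Ioi_self
  have hkα : IntegrableOn (gammaKernel α (α / 3)) (Ioc 0 6) :=
    (integrableOn_gammaKernel (by linarith) (by linarith)).mono_set Ioc_subset_Ioi_self
  have hφ : IntegrableOn (fun s => s ^ 2 * (gammaTilt s - gammaTilt 6) * exp (-s)) (Ioc 0 6) :=
    (continuous_sq_mul_gammaTilt_sub_mul_exp_neg _).integrableOn_Ioc
  calc E * ∫ s in Ioc 0 6, gammaKernel 3 1 s
      < E * ((∫ s in Ioc 0 6, gammaKernel 3 1 s)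
          + β * ∫ s in Ioc 0 6, s ^ 2 * (gammaTilt s - gammaTilt 6) * exp (-s)) := by
        gcongr
        exact lt_add_of_pos_right _ (mul_pos hβ integral_sq_mul_gammaTilt_sub_pos)
    _ = ∫ s in Ioc 0 6,
          E * (gammaKernel 3 1 s + β * (s ^ 2 * (gammaTilt s - gammaTilt 6) * exp (-s))) := by
        rw [integral_const_mul, integral_add hk3 (hφ.const_mul β), integral_const_mul]
    _ ≤ ∫ s in Ioc 0 6, gammaKernel α (α / 3) s := by
      refine setIntegral_mono_on ((hk3.add (hφ.const_mul β)).const_mul E) hkα measurableSet_Ioc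
        fun s hs => ?_
      have hsplit : exp (β * gammaTilt s) = E * exp (β * (gammaTilt s - gammaTilt 6)) := by
        rw [← exp_add]; ring_nf
      rw [gammaKernel_div_three hs.1, hsplit, gammaKernel_three_one]
      calc _ = s ^ 2 * exp (-s) * (E * (β * (gammaTilt s - gammaTilt 6) + 1)) := by ring
        _ ≤ _ := by gcongr; exact add_one_le_exp _

lemma integral_Ioi_gammaKernel_le_exp_mul {α : ℝ} (hα : 3 ≤ α) :
    ∫ s in Ioi 6, gammaKernel α (α / 3) s
      ≤ exp ((α - 3) * gammaTilt 6) * ∫ s in Ioi 6, gammaKernel 3 1 s := by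
  rw [← integral_const_mul]
  refine setIntegral_mono_on
    ((integrableOn_gammaKernel (by linarith) (by linarith)).mono_set (Ioi_subset_Ioi (by norm_num)))
    (((integrableOn_gammaKernel three_pos one_pos).mono_set
      (Ioi_subset_Ioi (by norm_num))).const_mul _) measurableSet_Ioi fun s hs => ?_
  have hs6 : 6 ≤ s := hs.le
  rw [gammaKernel_div_three (by linarith), mul_comm (exp _)]
  have := antitoneOn_gammaTilt (by norm_num : (6 : ℝ) ∈ Ici 3) (mem_Ici.2 (by linarith)) hs6
  gcongr
  exact gammaKernel_nonneg (by linarith)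

lemma div_add_lt_div_add {a b c d e : ℝ} (ha : 0 ≤ a) (hb : 0 < b) (he : 0 ≤ e) (hd : 0 ≤ d)
    (hac : e * a < c) (hdb : d ≤ e * b) : a / (a + b) < c / (c + d) := by
  rw [div_lt_div_iff₀ (by positivity) (by nlinarith)]
  nlinarith [mul_le_mul_of_nonneg_left hdb ha, mul_lt_mul_of_pos_right hac hb]

/-- For every `α > 3`, `F_α(2α) > F_3(6) = 1 − 25 e^{−6}`. -/
theorem gammaCDF_two_alpha_gt :
    gammaCDF 3 6 = 1 - 25 * Real.exp (-6) ∧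
    ∀ α : ℝ, 3 < α → gammaCDF α (2 * α) > gammaCDF 3 6 := by
  have hF3 : gammaCDF 3 6 = (∫ s in Ioc 0 6, gammaKernel 3 1 s) /
      ((∫ s in Ioc 0 6, gammaKernel 3 1 s) + ∫ s in Ioi 6, gammaKernel 3 1 s) := by
    simpa using gammaCDF_mul_eq_div (x := 6) three_pos one_pos (by norm_num)
  have htotal : (∫ s in Ioc 0 6, gammaKernel 3 1 s) + ∫ s in Ioi 6, gammaKernel 3 1 s = 2 := by
    rw [integral_Ioc_add_integral_Ioi_gammaKernel three_pos one_pos (by norm_num)]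
    norm_num [Gamma_ofNat_eq_factorial]
  have hbody := integral_Ioc_gammaKernel_three_one
  refine ⟨by rw [hF3, htotal, hbody]; ring, fun α hα => ?_⟩
  rw [hF3, show 2 * α = α / 3 * 6 by ring,
    gammaCDF_mul_eq_div (by linarith) (by linarith) (by norm_num)]
  refine div_add_lt_div_add ?_ (by linarith [exp_pos (-6)]) (exp_pos _).le ?_
    (exp_mul_integral_Ioc_gammaKernel_lt hα) (integral_Ioi_gammaKernel_le_exp_mul hα.le)
  · exact setIntegral_nonneg measurableSet_Ioc fun s hs => gammaKernel_nonneg hs.1.le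
  · exact setIntegral_nonneg measurableSet_Ioi fun s hs =>
      gammaKernel_nonneg (by linarith [mem_Ioi.1 hs])
end

section
/- For every real α > 3, the quantity a_α := 2√(2π) e^{−2α} (2α)^{α−1} / Γ(α) satisfies a_α ≤ 36√(2π) e^{−6} (≈ 0.223679). -/
/-!
Write `L α = (α - 1) log (2α) - 2α - log Γ(α)`, so that `a_α = 2√(2π) e^{L α}`. The functional
equation `Γ(α + 1) = α Γ(α)` together with `α log (1 + 1/α) ≤ 1` gives
`L (α + 1) - L α = log 2 - 2 + α log (1 + 1/α) < 0`, so it suffices to bound `L` on `[3, 4]`.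
There log-convexity of `Γ` gives `log Γ(α) ≥ (α - 2) log 2`, hence `L α ≤ (α - 1) log α - 2α + log 2`,
a convex function of `α`; its value at `4` is below its value `L 3` at `3` because `8/3 ≤ e`.
-/

open Real Set

namespace Real

lemma log_Gamma_add_one {x : ℝ} (hx : 0 < x) : log (Gamma (x + 1)) = log x + log (Gamma x) := by
  rw [Gamma_add_one hx.ne', log_mul hx.ne' (Gamma_pos_of_pos hx).ne']

/-- `log x` is the slope of `log ∘ Gamma` over `[x, x + 1]`. -/
lemma log_Gamma_add_one_add_mul_log_le {x y : ℝ} (hx : 0 < x) (hy : x + 1 ≤ y) :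
    log (Gamma (x + 1)) + (y - (x + 1)) * log x ≤ log (Gamma y) := by
  rcases hy.eq_or_lt with rfl | hy
  · simp
  have hslope := convexOn_log_Gamma.slope_mono_adjacent (mem_Ioi.2 hx)
    (mem_Ioi.2 (by linarith : 0 < y)) (lt_add_one x) hy
  simp only [Function.comp_apply, add_sub_cancel_left, div_one, log_Gamma_add_one hx] at hslope
  rw [le_div_iff₀ (by linarith)] at hslope
  linarith [log_Gamma_add_one hx]

lemma Gamma_three : Gamma 3 = 2 := by
  rw [show (3 : ℝ) = 2 + 1 by norm_num, Gamma_add_one two_ne_zero, Gamma_two, mul_one]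

lemma convexOn_sub_one_mul_log : ConvexOn ℝ (Ioi 0) fun t => (t - 1) * log t := by
  refine ((convexOn_mul_log.subset Ioi_subset_Ici_self (convex_Ioi 0)).add
    strictConcaveOn_log_Ioi.concaveOn.neg).congr fun t _ => ?_
  simp only [Pi.add_apply, Pi.neg_apply]
  ring

lemma three_mul_log_two_sub_log_three_le_one : 3 * log 2 - log 3 ≤ 1 := by
  have h : 3 * log 2 - log 3 = log (8 / 3) := by
    rw [log_div (by norm_num) (by norm_num), show (8 : ℝ) = 2 ^ 3 by norm_num, log_pow]
    push_cast
    ring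
  rw [h, log_le_iff_le_exp (by norm_num)]
  linarith [exp_one_gt_d9]

end Real

/-- `log (a_α / (2√(2π)))`. -/
noncomputable def logA (α : ℝ) : ℝ := (α - 1) * log (2 * α) - 2 * α - log (Gamma α)

lemma exp_logA {α : ℝ} (hα : 0 < α) :
    exp (logA α) = exp (-(2 * α)) * (2 * α) ^ (α - 1) / Gamma α := by
  rw [logA, exp_sub, exp_log (Gamma_pos_of_pos hα), sub_eq_add_neg, exp_add,
    rpow_def_of_pos (by positivity), mul_comm (α - 1), mul_comm (exp _)]

lemma logA_add_one_le {α : ℝ} (hα : 0 < α) : logA (α + 1) ≤ logA α := by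
  have hstep : α * (log (α + 1) - log α) ≤ 1 := by
    rw [← log_div (by positivity) hα.ne']
    calc α * log ((α + 1) / α) ≤ α * ((α + 1) / α - 1) :=
          mul_le_mul_of_nonneg_left (log_le_sub_one_of_pos (by positivity)) hα.le
      _ = 1 := by field_simp; ring
  rw [logA, logA, log_Gamma_add_one hα, log_mul two_ne_zero (by positivity),
    log_mul two_ne_zero hα.ne']
  linarith [log_two_lt_d9]

lemma logA_le_logA_three_of_le_four {α : ℝ} (h3 : 3 ≤ α) (h4 : α ≤ 4) : logA α ≤ logA 3 := by
  set D : ℝ → ℝ := fun t => (t - 1) * log t - 2 * t + log 2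
  have hD : ConvexOn ℝ (Ioi 0) D :=
    ((convexOn_sub_one_mul_log.sub ((concaveOn_id (convex_Ioi 0)).smul zero_le_two)).add_const
      (log 2)).congr fun _ _ => rfl
  have hΓ : (α - 2) * log 2 ≤ log (Gamma α) := by
    have h := log_Gamma_add_one_add_mul_log_le two_pos (by linarith : (2 : ℝ) + 1 ≤ α)
    rw [log_Gamma_add_one two_pos, Gamma_two, log_one] at h
    linarith
  have hlogA_le_D : logA α ≤ D α := by
    rw [logA, log_mul two_ne_zero (by positivity)]
    linarith
  have hD3 : D 3 = logA 3 := by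
    rw [logA, log_mul two_ne_zero three_ne_zero, Gamma_three]
    ring
  have hD4 : D 4 ≤ D 3 := by
    have h4 : log 4 = 2 * log 2 := by
      rw [show (4 : ℝ) = 2 ^ 2 by norm_num, log_pow]
      push_cast
      ring
    simp only [D, h4]
    linarith [three_mul_log_two_sub_log_three_le_one]
  have hseg : α ∈ segment ℝ 3 4 := by
    rw [segment_eq_Icc (by norm_num)]
    exact ⟨h3, h4⟩
  calc logA α ≤ D α := hlogA_le_D
    _ ≤ max (D 3) (D 4) := hD.le_on_segment (mem_Ioi.2 three_pos) (mem_Ioi.2 four_pos) hseg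
    _ = logA 3 := by rw [max_eq_left hD4, hD3]

lemma logA_le_logA_three {α : ℝ} (hα : 3 ≤ α) : logA α ≤ logA 3 := by
  suffices h : ∀ n : ℕ, ∀ α : ℝ, 3 ≤ α → α ≤ n + 4 → logA α ≤ logA 3 from
    h ⌈α⌉₊ α hα (by linarith [Nat.le_ceil α])
  intro n
  induction n with
  | zero =>
    intro α h3 h4
    exact logA_le_logA_three_of_le_four h3 (by simpa using h4)
  | succ n ih =>
    intro α h3 hn
    push_cast at hn
    rcases le_or_gt α (n + 4) with h | h
    · exact ih α h3 h
    · calc logA α = logA ((α - 1) + 1) := by rw [sub_add_cancel]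
        _ ≤ logA (α - 1) := logA_add_one_le (by linarith)
        _ ≤ logA 3 := ih _ (by linarith) (by linarith)

/-- For every `α > 3`, `a_α := 2√(2π) e^{−2α} (2α)^{α−1} / Γ(α)`
satisfies `a_α ≤ 36√(2π) e^{−6}`. -/
theorem a_alpha_le (α : ℝ) (hα : 3 < α) :
    2 * Real.sqrt (2 * Real.pi) * Real.exp (-(2 * α)) * (2 * α) ^ (α - 1) / Real.Gamma α ≤
      36 * Real.sqrt (2 * Real.pi) * Real.exp (-6) := by
  have hexp := exp_le_exp.2 (logA_le_logA_three hα.le)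
  rw [exp_logA (by linarith), exp_logA three_pos, Gamma_three] at hexp
  norm_num at hexp
  calc 2 * √(2 * π) * exp (-(2 * α)) * (2 * α) ^ (α - 1) / Gamma α
      = 2 * √(2 * π) * (exp (-(2 * α)) * (2 * α) ^ (α - 1) / Gamma α) := by ring
    _ ≤ 2 * √(2 * π) * (exp (-6) * 36 / 2) := by gcongr
    _ = 36 * √(2 * π) * exp (-6) := by ring
end

section
/- For every real α > 3 and every real b > 0, one has a_α · b · (1 + b²/(2α))^{α−1} < e^{b²/2}, where a_α := 2√(2π) e^{−2α} (2α)^{α−1} / Γ(α). -/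
/-!
Since `x ↦ e^{-x} x^α` decreases on `[α, ∞)`, it is at least `e^{-2α} (2α)^α` on `[α, 2α]`,
so `α Γ(α) = Γ(α + 1) ≥ α e^{-2α} (2α)^α`, i.e. `a_α ≤ √(2π) / α`. With `1 + t ≤ e^t` the
factor `(1 + b²/(2α))^{α-1}` is at most `e^{b²/2 - b²/(2α)}`, and it remains to see
`√(2π) b / α < e^{b²/(2α)}`: squared, this follows from `e y ≤ e^y` at `y = b²/α`
as soon as `2π < e α`, which holds for `α > 3`.
-/

open Real MeasureTheory Set

noncomputable def aAlpha (α : ℝ) : ℝ :=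
  2 * √(2 * π) * exp (-(2 * α)) * (2 * α) ^ (α - 1) / Gamma α

lemma one_add_rpow_le_exp_mul {t p : ℝ} (ht : -1 ≤ t) (hp : 0 ≤ p) :
    (1 + t) ^ p ≤ exp (t * p) := by
  rw [exp_mul]
  exact rpow_le_rpow (by linarith) (by linarith [add_one_le_exp t]) hp

lemma exp_neg_mul_rpow_le_of_mem_Icc {α x : ℝ} (hα : 0 < α) (hx : x ∈ Icc α (2 * α)) :
    exp (-(2 * α)) * (2 * α) ^ α ≤ exp (-x) * x ^ α := by
  obtain ⟨hαx, hx2α⟩ := hx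
  have hx0 : 0 < x := hα.trans_le hαx
  have hsplit : (2 * α) ^ α = x ^ α * (1 + (2 * α / x - 1)) ^ α := by
    rw [add_sub_cancel, ← mul_rpow hx0.le (by positivity), mul_div_cancel₀ _ hx0.ne']
  have hratio : (1 + (2 * α / x - 1)) ^ α ≤ exp (2 * α - x) := by
    refine (one_add_rpow_le_exp_mul ?_ hα.le).trans (exp_le_exp.mpr ?_)
    · linarith [div_nonneg (by linarith : (0 : ℝ) ≤ 2 * α) hx0.le]
    · have : (2 * α / x - 1) * α = (2 * α - x) * (α / x) := by field_simp
      rw [this]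
      exact mul_le_of_le_one_right (by linarith) ((div_le_one hx0).mpr hαx)
  calc exp (-(2 * α)) * (2 * α) ^ α
      ≤ exp (-(2 * α)) * (x ^ α * exp (2 * α - x)) := by
        rw [hsplit]; gcongr
    _ = exp (-x) * x ^ α := by
        rw [mul_left_comm, ← exp_add, mul_comm]; ring_nf

lemma exp_neg_two_mul_mul_rpow_le_Gamma {α : ℝ} (hα : 0 < α) :
    exp (-(2 * α)) * (2 * α) ^ α ≤ Gamma α := by
  set c := exp (-(2 * α)) * (2 * α) ^ α
  have hint : IntegrableOn (fun x ↦ exp (-x) * x ^ α) (Ioi 0) := by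
    simpa using GammaIntegral_convergent (by linarith : 0 < α + 1)
  have hIcc : Icc α (2 * α) ⊆ Ioi 0 := fun x hx ↦ hα.trans_le hx.1
  have hconst : ∫ _ in Icc α (2 * α), c = α * c := by
    rw [setIntegral_const, measureReal_def, volume_Icc, ENNReal.toReal_ofReal (by linarith),
      smul_eq_mul]
    ring
  have hwindow : α * c ≤ ∫ x in Icc α (2 * α), exp (-x) * x ^ α := by
    rw [← hconst]
    exact setIntegral_mono_on (integrableOn_const (by simp)) (hint.mono_set hIcc)
      measurableSet_Icc fun x hx ↦ exp_neg_mul_rpow_le_of_mem_Icc hα hx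
  have hwhole : ∫ x in Icc α (2 * α), exp (-x) * x ^ α ≤ Gamma (α + 1) := by
    rw [Gamma_eq_integral (by linarith), add_sub_cancel_right]
    refine setIntegral_mono_set hint ?_ hIcc.eventuallyLE
    filter_upwards [ae_restrict_mem measurableSet_Ioi] with x (hx : 0 < x)
    positivity
  rw [Gamma_add_one hα.ne'] at hwhole
  exact le_of_mul_le_mul_left (hwindow.trans hwhole) hα

lemma aAlpha_le {α : ℝ} (hα : 0 < α) : aAlpha α ≤ √(2 * π) / α := by
  rw [aAlpha, div_le_div_iff₀ (Gamma_pos_of_pos hα) hα, rpow_sub_one (by positivity)]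
  calc 2 * √(2 * π) * exp (-(2 * α)) * ((2 * α) ^ α / (2 * α)) * α
      = √(2 * π) * (exp (-(2 * α)) * (2 * α) ^ α) := by field_simp
    _ ≤ √(2 * π) * Gamma α := by gcongr; exact exp_neg_two_mul_mul_rpow_le_Gamma hα

lemma mul_lt_exp_sq_div {κ c b : ℝ} (hc : 0 < c) (hb : b ≠ 0) (h : κ ^ 2 * c < exp 1) :
    κ * b < exp (b ^ 2 / (2 * c)) := by
  refine lt_of_pow_lt_pow_left₀ 2 (exp_nonneg _) ?_
  have hb2 : 0 < b ^ 2 / c := by positivity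
  calc (κ * b) ^ 2 = κ ^ 2 * c * (b ^ 2 / c) := by field_simp
    _ < exp 1 * (b ^ 2 / c) := by gcongr
    _ ≤ exp (b ^ 2 / c) := exp_one_mul_le_exp
    _ = exp (b ^ 2 / (2 * c)) ^ 2 := by rw [← exp_nat_mul]; congr 1; field_simp; ring

/-- For every `α > 3` and `b > 0`,
`a_α · b · (1 + b²/(2α))^{α−1} < e^{b²/2}` where
`a_α := 2√(2π) e^{−2α} (2α)^{α−1} / Γ(α)`. -/
theorem a_alpha_bound (α b : ℝ) (hα : 3 < α) (hb : 0 < b) :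
    (2 * Real.sqrt (2 * Real.pi) * Real.exp (-(2 * α)) * (2 * α) ^ (α - 1) / Real.Gamma α) *
        b * (1 + b ^ 2 / (2 * α)) ^ (α - 1) < Real.exp (b ^ 2 / 2) := by
  have hα0 : 0 < α := by linarith
  have hbound : √(2 * π) / α * b < exp (b ^ 2 / (2 * α)) := by
    refine mul_lt_exp_sq_div hα0 hb.ne' ?_
    rw [div_pow, sq_sqrt (by positivity), div_mul_eq_mul_div, div_lt_iff₀ (by positivity)]
    nlinarith [pi_le_four, exp_one_gt_d9]
  have hpow : (1 + b ^ 2 / (2 * α)) ^ (α - 1) ≤ exp (b ^ 2 / (2 * α) * (α - 1)) :=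
    one_add_rpow_le_exp_mul (by linarith [div_nonneg (sq_nonneg b) (by linarith : 0 ≤ 2 * α)])
      (by linarith)
  calc aAlpha α * b * (1 + b ^ 2 / (2 * α)) ^ (α - 1)
      ≤ √(2 * π) / α * b * exp (b ^ 2 / (2 * α) * (α - 1)) := by
        gcongr
        exact aAlpha_le hα0
    _ < exp (b ^ 2 / (2 * α)) * exp (b ^ 2 / (2 * α) * (α - 1)) := by gcongr
    _ = exp (b ^ 2 / 2) := by rw [← exp_add]; congr 1; field_simp; ring
end

section
/- For every θ ∈ ℝ, the pushforward of the product of the uniform probability measure on (0,1) and the uniform probability measure on (0,2π), under the map (ψ, φ) ↦ √(−2 log ψ) · cos(φ + θ), is the Gaussian measure N(0,1) on ℝ with mean 0 and variance 1. -/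
/-!
The pair `(R cos (Φ + θ), R sin (Φ + θ))` with `R = √(-2 log U)` is `polarCoord.symm (R, Φ + θ)`;
we show that it has law `N(0,1) ⊗ N(0,1)` and project to the first coordinate. Since `cos` and
`sin` are `2π`-periodic, the shift by `θ` does not change the law of the angle, which is uniform.
The substitution `U = exp (-R² / 2)` shows that `R` has the Rayleigh density `r e^{-r²/2}` on
`(0, ∞)`, so `(R, Φ)` has density `(2π)⁻¹ r e^{-r²/2}` on `polarCoord.target`; by the polar change
of variables this is the density `(2π)⁻¹ e^{-(x² + y²)/2}` of `N(0,1) ⊗ N(0,1)`.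
-/

open MeasureTheory ProbabilityTheory Set Real
open scoped ENNReal

theorem Function.Periodic.setLIntegral_Ioc_comp_add_right {f : ℝ → ℝ≥0∞} {T : ℝ}
    (hf : Function.Periodic f T) (hT : 0 < T) (s t θ : ℝ) :
    ∫⁻ x in Ioc s (s + T), f (x + θ) = ∫⁻ x in Ioc t (t + T), f x := by
  have : Fact (0 < T) := ⟨hT⟩
  -- Both sides are the integral over `AddCircle T` of the lift of `f`, up to a translation.
  have hlift : ∀ x : ℝ, f x = hf.lift (x : AddCircle T) := fun x => rfl
  simp_rw [hlift, AddCircle.coe_add, AddCircle.lintegral_preimage T s (fun y => hf.lift (y + θ)),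
    AddCircle.lintegral_preimage T t, lintegral_add_right_eq_self]

lemma sqrt_neg_two_mul_log_exp {r : ℝ} (hr : 0 ≤ r) : √(-(2 * log (exp (-(r ^ 2 / 2))))) = r := by
  rw [log_exp, show -(2 * -(r ^ 2 / 2)) = r ^ 2 by ring, sqrt_sq hr]

lemma image_exp_neg_sq_div_two_Ioi : (fun r : ℝ => exp (-(r ^ 2 / 2))) '' Ioi 0 = Ioo 0 1 := by
  refine Subset.antisymm ?_ fun ψ ⟨hψ0, hψ1⟩ => ?_
  · rintro _ ⟨r, hr, rfl⟩
    exact ⟨exp_pos _, exp_lt_one_iff.mpr (by nlinarith [mem_Ioi.mp hr])⟩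
  · have hlog : 0 < -(2 * log ψ) := by linarith [log_neg hψ0 hψ1]
    refine ⟨√(-(2 * log ψ)), sqrt_pos.mpr hlog, ?_⟩
    dsimp only
    rw [sq_sqrt hlog.le, neg_div, neg_neg, mul_div_cancel_left₀ _ two_ne_zero, exp_log hψ0]

theorem lintegral_Ioo_comp_sqrt_neg_two_mul_log (G : ℝ → ℝ≥0∞) :
    ∫⁻ ψ in Ioo 0 1, G √(-(2 * log ψ)) =
      ∫⁻ r in Ioi 0, ENNReal.ofReal (r * exp (-(r ^ 2 / 2))) * G r := by
  have hderiv : ∀ r ∈ Ioi (0 : ℝ), HasDerivWithinAt (fun r : ℝ => exp (-(r ^ 2 / 2)))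
      (-r * exp (-(r ^ 2 / 2))) (Ioi 0) r := fun r _ => by
    have : HasDerivAt (fun r : ℝ => exp (-(r ^ 2 / 2))) (-r * exp (-(r ^ 2 / 2))) r := by
      convert ((hasDerivAt_pow 2 r).div_const 2).fun_neg.exp using 1
      push_cast
      ring
    exact this.hasDerivWithinAt
  have hinj : InjOn (fun r : ℝ => exp (-(r ^ 2 / 2))) (Ioi 0) := by
    intro x hx y hy hxy
    rw [← sqrt_neg_two_mul_log_exp (le_of_lt hx), ← sqrt_neg_two_mul_log_exp (le_of_lt hy)]
    exact congrArg (fun u => √(-(2 * log u))) hxy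
  rw [← image_exp_neg_sq_div_two_Ioi,
    lintegral_image_eq_lintegral_abs_deriv_mul measurableSet_Ioi hderiv hinj]
  refine setLIntegral_congr_fun measurableSet_Ioi fun r (hr : 0 < r) => ?_
  rw [sqrt_neg_two_mul_log_exp hr.le, abs_mul, abs_neg, abs_of_pos hr, abs_of_pos (exp_pos _)]

lemma lintegral_Ioo_zero_two_pi_polarCoord_symm_add (f : ℝ × ℝ → ℝ≥0∞) (r θ : ℝ) :
    ∫⁻ φ in Ioo 0 (2 * π), f (polarCoord.symm (r, φ + θ)) =
      ∫⁻ φ in Ioo (-π) π, f (polarCoord.symm (r, φ)) := by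
  have hper : Function.Periodic (fun φ => f (polarCoord.symm (r, φ))) (2 * π) := fun φ => by
    simp only [polarCoord_symm_apply, cos_periodic φ, sin_periodic φ]
  have := hper.setLIntegral_Ioc_comp_add_right two_pi_pos 0 (-π) θ
  rw [zero_add, show -π + 2 * π = π by ring] at this
  rwa [setLIntegral_congr Ioo_ae_eq_Ioc, setLIntegral_congr Ioo_ae_eq_Ioc]

lemma gaussianReal_prod_gaussianReal :
    (gaussianReal 0 1).prod (gaussianReal 0 1) = volume.withDensity
      (fun z : ℝ × ℝ => ENNReal.ofReal ((2 * π)⁻¹ * exp (-((z.1 ^ 2 + z.2 ^ 2) / 2)))) := by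
  rw [gaussianReal_of_var_ne_zero 0 one_ne_zero,
    prod_withDensity (measurable_gaussianPDF 0 1) (measurable_gaussianPDF 0 1),
    ← Measure.volume_eq_prod]
  congr with z
  have hsq : (√(2 * π))⁻¹ * (√(2 * π))⁻¹ = (2 * π)⁻¹ := by
    rw [← mul_inv, mul_self_sqrt two_pi_pos.le]
  simp only [gaussianPDF, gaussianPDFReal, NNReal.coe_one, mul_one, sub_zero]
  rw [← ENNReal.ofReal_mul (by positivity), ← hsq]
  congr 1
  rw [neg_div, neg_div, add_div, neg_add, exp_add]
  ring

lemma lintegral_exp_neg_sq_div_two_mul_eq_polar {f : ℝ × ℝ → ℝ≥0∞} (hf : Measurable f) :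
    ∫⁻ z, ENNReal.ofReal (exp (-((z.1 ^ 2 + z.2 ^ 2) / 2))) * f z =
      ∫⁻ r in Ioi 0, ENNReal.ofReal (r * exp (-(r ^ 2 / 2))) *
        ∫⁻ φ in Ioo (-π) π, f (polarCoord.symm (r, φ)) := by
  have hsymm : Measurable polarCoord.symm := continuous_polarCoord_symm.measurable
  rw [← lintegral_comp_polarCoord_symm, polarCoord_target, Measure.volume_eq_prod,
    ← Measure.prod_restrict, lintegral_prod _ (by fun_prop)]
  refine setLIntegral_congr_fun measurableSet_Ioi fun r (hr : 0 < r) => ?_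
  rw [← lintegral_const_mul' _ _ ENNReal.ofReal_ne_top]
  refine setLIntegral_congr_fun measurableSet_Ioo fun φ _ => ?_
  have hnorm : (r * cos φ) ^ 2 + (r * sin φ) ^ 2 = r ^ 2 := by
    linear_combination r ^ 2 * sin_sq_add_cos_sq φ
  simp only [polarCoord_symm_apply, hnorm, smul_eq_mul, ENNReal.ofReal_mul hr.le, mul_assoc]

lemma lintegral_gaussianReal_prod_gaussianReal {f : ℝ × ℝ → ℝ≥0∞} (hf : Measurable f) :
    ∫⁻ z, f z ∂(gaussianReal 0 1).prod (gaussianReal 0 1) =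
      (ENNReal.ofReal (2 * π))⁻¹ * ∫⁻ r in Ioi 0, ENNReal.ofReal (r * exp (-(r ^ 2 / 2))) *
        ∫⁻ φ in Ioo (-π) π, f (polarCoord.symm (r, φ)) := by
  rw [gaussianReal_prod_gaussianReal, lintegral_withDensity_eq_lintegral_mul _ (by fun_prop) hf,
    ← lintegral_exp_neg_sq_div_two_mul_eq_polar hf, ← ENNReal.ofReal_inv_of_pos two_pi_pos,
    ← lintegral_const_mul' _ _ ENNReal.ofReal_ne_top]
  simp only [Pi.mul_apply, ENNReal.ofReal_mul (inv_nonneg.mpr two_pi_pos.le), mul_assoc]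

noncomputable def boxMuller (θ : ℝ) (p : ℝ × ℝ) : ℝ × ℝ :=
  polarCoord.symm (√(-(2 * log p.1)), p.2 + θ)

lemma measurable_boxMuller (θ : ℝ) : Measurable (boxMuller θ) :=
  continuous_polarCoord_symm.measurable.comp (by fun_prop)

lemma lintegral_comp_boxMuller {f : ℝ × ℝ → ℝ≥0∞} (hf : Measurable f) (θ : ℝ) :
    ∫⁻ p, f (boxMuller θ p) ∂((volume.restrict (Ioo 0 1)).prod
        ((ENNReal.ofReal (2 * π))⁻¹ • volume.restrict (Ioo 0 (2 * π)))) =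
      (ENNReal.ofReal (2 * π))⁻¹ * ∫⁻ r in Ioi 0, ENNReal.ofReal (r * exp (-(r ^ 2 / 2))) *
        ∫⁻ φ in Ioo (-π) π, f (polarCoord.symm (r, φ)) := by
  rw [lintegral_prod (fun p => f (boxMuller θ p)) (hf.comp (measurable_boxMuller θ)).aemeasurable]
  simp_rw [boxMuller, lintegral_smul_measure, smul_eq_mul,
    lintegral_Ioo_zero_two_pi_polarCoord_symm_add]
  rw [lintegral_const_mul' _ _ (ENNReal.inv_ne_top.mpr (ENNReal.ofReal_pos.mpr two_pi_pos).ne'),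
    lintegral_Ioo_comp_sqrt_neg_two_mul_log
      (fun r => ∫⁻ φ in Ioo (-π) π, f (polarCoord.symm (r, φ)))]

theorem map_boxMuller_eq_gaussianReal_prod (θ : ℝ) :
    Measure.map (boxMuller θ)
      ((volume.restrict (Ioo 0 1)).prod
        ((ENNReal.ofReal (2 * π))⁻¹ • volume.restrict (Ioo 0 (2 * π)))) =
      (gaussianReal 0 1).prod (gaussianReal 0 1) := by
  refine Measure.ext_of_lintegral _ fun f hf => ?_
  rw [lintegral_map hf (measurable_boxMuller θ), lintegral_comp_boxMuller hf,
    lintegral_gaussianReal_prod_gaussianReal hf]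

/-- For every `θ ∈ ℝ`, the pushforward of (uniform on (0,1)) × (uniform on (0,2π)) under
`(ψ, φ) ↦ √(−2 log ψ) · cos(φ + θ)` is the standard Gaussian measure `N(0,1)`. -/
theorem map_boxMuller_eq_gaussian (θ : ℝ) :
    Measure.map (fun p : ℝ × ℝ => Real.sqrt (-(2 * Real.log p.1)) * Real.cos (p.2 + θ))
      ((volume.restrict (Set.Ioo (0 : ℝ) 1)).prod
        ((ENNReal.ofReal (2 * Real.pi))⁻¹ • volume.restrict (Set.Ioo (0 : ℝ) (2 * Real.pi)))) =
      gaussianReal 0 1 := by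
  have hpair := congrArg (Measure.map Prod.fst) (map_boxMuller_eq_gaussianReal_prod θ)
  -- `Prod.fst ∘ boxMuller θ` is definitionally the map in the statement.
  rwa [Measure.map_map measurable_fst (measurable_boxMuller θ), Measure.map_fst_prod, measure_univ,
    one_smul] at hpair
end

section
/- Let B be a nonempty finite index set, χ : B → ℝ with χ_β ≥ 0 for all β, and k : B → ℝ³. Equip Ω = (0,1)^B × (0,2π)^B with the product μ of the uniform probability measures on the factors, and for x ∈ ℝ³ define G_x(ψ, φ) = Σ_{β∈B} √(2 χ_β) · √(−log ψ_β) · cos(φ_β + ⟨k_β, x⟩). Then for all x, ζ ∈ ℝ³, ∫_Ω G_{x+ζ} · G_x dμ = Σ_{β∈B} χ_β cos(⟨k_β, ζ⟩); in particular this covariance does not depend on x (homogeneity), and if Σ_β χ_β = 1 then ∫_Ω G_x² dμ = 1. -/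
/-!
Expanding the product gives a double sum over `β, γ ∈ B`. The coordinates of `(ψ, φ)` are
independent under the product measure, so for `β ≠ γ` the phase factor integrates to
`(∫ cos (φ + a)) (∫ cos (φ + b)) = 0`, the phase being uniform on a full period. On the diagonal
the amplitude contributes `∫₀¹ -log ψ = 1` and the phase
`∫ cos (φ + a) cos (φ + b) = cos (a - b) / 2`, so only `2 χ_β · cos (a_β - b_β) / 2` survives,
with `a_β - b_β = ⟨k_β, ζ⟩`.
-/

open MeasureTheory ProbabilityTheory

section RandomPhaseSum

variable {B α γ : Type*} [Fintype B] [MeasurableSpace α] [MeasurableSpace γ]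
  {m₁ : Measure α} {m₂ : Measure γ} [IsProbabilityMeasure m₁] [IsProbabilityMeasure m₂]

lemma integrable_comp_eval_mul_comp_eval {f g : γ → ℝ} (hf : MemLp f 2 m₂) (hg : MemLp g 2 m₂)
    (β β' : B) :
    Integrable (fun x : B → γ => f (x β) * g (x β')) (Measure.pi fun _ => m₂) :=
  (hf.comp_measurePreserving (measurePreserving_eval _ β)).integrable_mul
    (hg.comp_measurePreserving (measurePreserving_eval _ β'))

lemma integral_comp_eval_mul_comp_eval_of_ne {f g : γ → ℝ} (hf : AEStronglyMeasurable f m₂)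
    (hg : AEStronglyMeasurable g m₂) {β β' : B} (h : β ≠ β') :
    ∫ x : B → γ, f (x β) * g (x β') ∂(Measure.pi fun _ => m₂)
      = (∫ u, f u ∂m₂) * ∫ u, g u ∂m₂ := by
  have hindep : IndepFun (fun x : B → γ => x β) (fun x => x β') (Measure.pi fun _ => m₂) :=
    (iIndepFun_pi (X := fun _ => id) fun _ => aemeasurable_id).indepFun h
  rw [hindep.integral_fun_comp_mul_comp (measurable_pi_apply β).aemeasurable
      (measurable_pi_apply β').aemeasurable
      (by rwa [(measurePreserving_eval _ β).map_eq])
      (by rwa [(measurePreserving_eval _ β').map_eq]),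
    integral_comp_eval hf, integral_comp_eval hg]

theorem integral_sum_mul_sum_of_integral_eq_zero {A : α → ℝ} (hA : MemLp A 2 m₁)
    {f g : B → γ → ℝ} (hf : ∀ β, MemLp (f β) 2 m₂) (hg : ∀ β, MemLp (g β) 2 m₂)
    (hf₀ : ∀ β, ∫ u, f β u ∂m₂ = 0) (c d : B → ℝ) :
    ∫ p, (∑ β, c β * A (p.1 β) * f β (p.2 β)) * (∑ β, d β * A (p.1 β) * g β (p.2 β))
        ∂(Measure.pi fun _ => m₁).prod (Measure.pi fun _ => m₂)
      = ∑ β, c β * d β * (∫ u, A u ^ 2 ∂m₁) * ∫ u, f β u * g β u ∂m₂ := by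
  classical
  have hexpand : ∀ p : (B → α) × (B → γ),
      (∑ β, c β * A (p.1 β) * f β (p.2 β)) * (∑ β, d β * A (p.1 β) * g β (p.2 β))
        = ∑ β, ∑ β', c β * d β' * (A (p.1 β) * A (p.1 β') * (f β (p.2 β) * g β' (p.2 β'))) := by
    intro p
    rw [Finset.sum_mul_sum]
    exact Finset.sum_congr rfl fun β _ => Finset.sum_congr rfl fun β' _ => by ring
  have hint : ∀ β β', Integrable (fun p : (B → α) × (B → γ) =>
      c β * d β' * (A (p.1 β) * A (p.1 β') * (f β (p.2 β) * g β' (p.2 β'))))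
      ((Measure.pi fun _ => m₁).prod (Measure.pi fun _ => m₂)) := fun β β' =>
    ((integrable_comp_eval_mul_comp_eval hA hA β β').mul_prod
      (integrable_comp_eval_mul_comp_eval (hf β) (hg β') β β')).const_mul _
  have hterm : ∀ β β', ∫ p, c β * d β' * (A (p.1 β) * A (p.1 β') * (f β (p.2 β) * g β' (p.2 β')))
        ∂(Measure.pi fun _ => m₁).prod (Measure.pi fun _ => m₂)
      = c β * d β' * (∫ x, A (x β) * A (x β') ∂Measure.pi fun _ => m₁) *
          ∫ x, f β (x β) * g β' (x β') ∂Measure.pi fun _ => m₂ := by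
    intro β β'
    rw [integral_const_mul, integral_prod_mul (f := fun x : B → α => A (x β) * A (x β'))
      (g := fun x : B → γ => f β (x β) * g β' (x β'))]
    ring
  simp_rw [hexpand]
  rw [integral_finsetSum _ fun β _ => integrable_finsetSum _ fun β' _ => hint β β']
  refine Finset.sum_congr rfl fun β _ => ?_
  rw [integral_finsetSum _ fun β' _ => hint β β', Fintype.sum_eq_single β]
  · rw [hterm, integral_comp_eval (μ := fun _ => m₁) (f := fun u => A u * A u) (hA.1.mul hA.1),
      integral_comp_eval (μ := fun _ => m₂) (f := fun u => f β u * g β u) ((hf β).1.mul (hg β).1)]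
    simp only [sq]
  · intro β' hne
    rw [hterm, integral_comp_eval_mul_comp_eval_of_ne (hf β).1 (hg β').1 (Ne.symm hne), hf₀,
      zero_mul, mul_zero]

end RandomPhaseSum

section SpectralSum

open Real Set

lemma sq_sqrt_neg_log_ae :
    ∀ᵐ u ∂volume.restrict (Ioo (0 : ℝ) 1), √(-log u) ^ 2 = -log u :=
  ae_restrict_of_forall_mem measurableSet_Ioo fun _ hu =>
    sq_sqrt (neg_nonneg.2 (log_nonpos hu.1.le hu.2.le))

lemma integrableOn_log_Ioo_zero_one : IntegrableOn log (Ioo (0 : ℝ) 1) :=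
  intervalIntegral.intervalIntegrable_log'.1.mono_set Ioo_subset_Ioc_self

lemma integral_log_Ioo_zero_one : ∫ u in Ioo (0 : ℝ) 1, log u = -1 := by
  rw [← integral_Ioc_eq_integral_Ioo, ← intervalIntegral.integral_of_le zero_le_one, integral_log]
  simp

lemma memLp_sqrt_neg_log : MemLp (fun u => √(-log u)) 2 (volume.restrict (Ioo (0 : ℝ) 1)) :=
  (memLp_two_iff_integrable_sq (by fun_prop)).2 <|
    integrableOn_log_Ioo_zero_one.neg.congr (sq_sqrt_neg_log_ae.mono fun _ h => h.symm)

lemma integral_sqrt_neg_log_sq : ∫ u in Ioo (0 : ℝ) 1, √(-log u) ^ 2 = 1 := by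
  rw [integral_congr_ae sq_sqrt_neg_log_ae, integral_neg, integral_log_Ioo_zero_one, neg_neg]

instance isProbabilityMeasure_restrict_Ioo_zero_one :
    IsProbabilityMeasure (volume.restrict (Ioo (0 : ℝ) 1)) :=
  ⟨by simp⟩

noncomputable def uniformAngle : Measure ℝ :=
  (ENNReal.ofReal (2 * π))⁻¹ • volume.restrict (Ioo 0 (2 * π))

instance isProbabilityMeasure_uniformAngle : IsProbabilityMeasure uniformAngle :=
  ⟨by
    rw [uniformAngle, Measure.smul_apply, Measure.restrict_apply_univ, Real.volume_Ioo, sub_zero,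
      smul_eq_mul, ENNReal.inv_mul_cancel (by simp [pi_pos]) ENNReal.ofReal_ne_top]⟩

lemma integral_uniformAngle (f : ℝ → ℝ) :
    ∫ u, f u ∂uniformAngle = (∫ u in 0..2 * π, f u) / (2 * π) := by
  rw [uniformAngle, integral_smul_measure, intervalIntegral.integral_of_le two_pi_pos.le,
    integral_Ioc_eq_integral_Ioo, ENNReal.toReal_inv, ENNReal.toReal_ofReal two_pi_pos.le,
    smul_eq_mul, inv_mul_eq_div]

lemma integral_cos_add_uniformAngle (a : ℝ) : ∫ u, cos (u + a) ∂uniformAngle = 0 := by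
  rw [integral_uniformAngle, intervalIntegral.integral_comp_add_right (fun u => cos u),
    integral_cos, zero_add, add_comm, sin_add_two_pi, sub_self, zero_div]

lemma integral_cos_two_mul_add (c : ℝ) : ∫ u in 0..2 * π, cos (2 * u + c) = 0 := by
  rw [intervalIntegral.integral_comp_mul_add (fun u => cos u) two_ne_zero, integral_cos,
    show 2 * (2 * π) + c = c + 2 * π + 2 * π by ring, sin_add_two_pi, sin_add_two_pi]
  simp

lemma integral_cos_add_mul_cos_add_uniformAngle (a b : ℝ) :
    ∫ u, cos (u + a) * cos (u + b) ∂uniformAngle = cos (a - b) / 2 := by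
  have product_to_sum :
      ∀ u, cos (u + a) * cos (u + b) = cos (a - b) / 2 + cos (2 * u + (a + b)) / 2 := by
    intro u
    have := two_mul_cos_mul_cos (u + a) (u + b)
    rw [show u + a - (u + b) = a - b by ring,
      show u + a + (u + b) = 2 * u + (a + b) by ring] at this
    linarith
  simp_rw [product_to_sum]
  rw [integral_uniformAngle, intervalIntegral.integral_add intervalIntegrable_const
      ((by fun_prop : Continuous fun u => cos (2 * u + (a + b)) / 2).intervalIntegrable _ _),
    intervalIntegral.integral_div, intervalIntegral.integral_div, integral_cos_two_mul_add,
    intervalIntegral.integral_const]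
  field_simp
  ring

lemma memLp_cos_add {μ : Measure ℝ} [IsFiniteMeasure μ] (a : ℝ) (p : ENNReal) :
    MemLp (fun u => cos (u + a)) p μ :=
  MemLp.of_bound (by fun_prop) 1 (.of_forall fun _ => by simpa using abs_cos_le_one _)

theorem integral_spectralSum_mul_spectralSum {B : Type*} [Fintype B] {χ : B → ℝ}
    (hχ : ∀ β, 0 ≤ χ β) (a b : B → ℝ) :
    ∫ p, (∑ β, √(2 * χ β) * √(-log (p.1 β)) * cos (p.2 β + a β)) *
        (∑ β, √(2 * χ β) * √(-log (p.1 β)) * cos (p.2 β + b β))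
        ∂(Measure.pi fun _ : B => volume.restrict (Ioo (0 : ℝ) 1)).prod
          (Measure.pi fun _ : B => uniformAngle)
      = ∑ β, χ β * cos (a β - b β) := by
  rw [integral_sum_mul_sum_of_integral_eq_zero memLp_sqrt_neg_log (fun β => memLp_cos_add (a β) 2)
    (fun β => memLp_cos_add (b β) 2) (fun β => integral_cos_add_uniformAngle (a β))]
  refine Finset.sum_congr rfl fun β _ => ?_
  rw [← sq, sq_sqrt (by linarith [hχ β]), integral_sqrt_neg_log_sq,
    integral_cos_add_mul_cos_add_uniformAngle]
  ring

end SpectralSum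

theorem spectral_field_covariance_general {B : Type*} [Fintype B]
    (χ : B → ℝ) (hχ : ∀ β, 0 ≤ χ β) (k : B → Fin 3 → ℝ) :
    let μ := (Measure.pi fun _ : B => volume.restrict (Set.Ioo (0 : ℝ) 1)).prod
      (Measure.pi fun _ : B =>
        (ENNReal.ofReal (2 * Real.pi))⁻¹ • volume.restrict (Set.Ioo (0 : ℝ) (2 * Real.pi)))
    let G := fun (x : Fin 3 → ℝ) (p : (B → ℝ) × (B → ℝ)) =>
      ∑ β, Real.sqrt (2 * χ β) * Real.sqrt (-Real.log (p.1 β)) *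
        Real.cos (p.2 β + ∑ j, k β j * x j)
    (∀ x ζ : Fin 3 → ℝ,
      ∫ p, G (x + ζ) p * G x p ∂μ = ∑ β, χ β * Real.cos (∑ j, k β j * ζ j)) ∧
    ((∑ β, χ β = 1) → ∀ x : Fin 3 → ℝ, ∫ p, (G x p) ^ 2 ∂μ = 1) := by
  intro μ G
  have covariance : ∀ x ζ : Fin 3 → ℝ,
      ∫ p, G (x + ζ) p * G x p ∂μ = ∑ β, χ β * Real.cos (∑ j, k β j * ζ j) := by
    intro x ζ
    have phase_diff : ∀ β, ∑ j, k β j * (x + ζ) j - ∑ j, k β j * x j = ∑ j, k β j * ζ j := by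
      intro β
      simp only [Pi.add_apply, mul_add, Finset.sum_add_distrib, add_sub_cancel_left]
    have h := integral_spectralSum_mul_spectralSum hχ
      (fun β => ∑ j, k β j * (x + ζ) j) (fun β => ∑ j, k β j * x j)
    simp only [phase_diff] at h
    exact h
  refine ⟨covariance, fun hχ_one x => ?_⟩
  simpa [sq, hχ_one] using covariance x 0

/-- Covariance structure of the spectral representation: with
`G_x(ψ,φ) = Σ_β √(2χ_β) √(−log ψ_β) cos(φ_β + ⟨k_β, x⟩)` on
`(0,1)^B × (0,2π)^B` with the product of the uniform measures,
`∫ G_{x+ζ} G_x dμ = Σ_β χ_β cos⟨k_β, ζ⟩` (independent of `x`), and if `Σ χ = 1`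
then `∫ G_x² dμ = 1`. -/
theorem spectral_field_covariance {B : Type*} [Fintype B] [Nonempty B]
    (χ : B → ℝ) (hχ : ∀ β, 0 ≤ χ β) (k : B → Fin 3 → ℝ) :
    let μ := (Measure.pi fun _ : B => volume.restrict (Set.Ioo (0 : ℝ) 1)).prod
      (Measure.pi fun _ : B =>
        (ENNReal.ofReal (2 * Real.pi))⁻¹ • volume.restrict (Set.Ioo (0 : ℝ) (2 * Real.pi)))
    let G := fun (x : Fin 3 → ℝ) (p : (B → ℝ) × (B → ℝ)) =>
      ∑ β, Real.sqrt (2 * χ β) * Real.sqrt (-Real.log (p.1 β)) *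
        Real.cos (p.2 β + ∑ j, k β j * x j)
    (∀ x ζ : Fin 3 → ℝ,
      ∫ p, G (x + ζ) p * G x p ∂μ = ∑ β, χ β * Real.cos (∑ j, k β j * ζ j)) ∧
    ((∑ β, χ β = 1) → ∀ x : Fin 3 → ℝ, ∫ p, (G x p) ^ 2 ∂μ = 1) :=
  spectral_field_covariance_general χ hχ k
end

section
/- Let (Ω, 𝒯, 𝒫) be a probability space, let δ ∈ (0, √(7/11)), set σ = δ/√7 and α_m = 1/(2σ²) + (1−m)/2 for m = 1,…,6 (so α₁ > … > α₆ > 3). For 1 ≤ m ≤ n ≤ 6, let G_{mn} : Ω → ℝ be mutually independent square-integrable random variables with E{G_{mn}} = 0 and E{G_{mn}²} = 1, and for each m let h_m : ℝ → ℝ be measurable with 0 ≤ h_m(b) ≤ 2α_m + b² for all b and E{h_m(G_{mm})} = α_m. Define the random 6×6 upper triangular matrix L by L_{mn} = σ G_{mn} for m < n, L_{mm} = σ √(2 h_m(G_{mm})), and L_{mn} = 0 for m > n. Then E{(Lᵀ L)_{mn}} = δ_{mn} for all 1 ≤ m, n ≤ 6; that is, E{Lᵀ L} = I₆. -/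
/-!
Write `(Lᵀ L)_{mn} = ∑_k L_{km} L_{kn}`. Each entry `L_{km}` is a measurable function of
`G_{km}` alone, so for `m ≠ n` the two factors are independent and one of them is a centered
off-diagonal entry: every cross term has mean zero. On the diagonal, `E{L_{km}²}` is `σ²` for
`k < m` and `2σ²α_m` for `k = m`, and `α_m` is chosen so that `m σ² + 2σ²α_m = 1`
(indices counted from `0`).
-/

open MeasureTheory ProbabilityTheory Matrix Finset

section TransposeMulSelf

variable {Ω ι : Type*} [MeasurableSpace Ω] {μ : Measure Ω} [Fintype ι] [DecidableEq ι]

theorem integral_transpose_mul_self_apply (L : Ω → Matrix ι ι ℝ)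
    (hL2 : ∀ k m, MemLp (fun ω => L ω k m) 2 μ)
    (hindep : ∀ k m n, m ≠ n → IndepFun (fun ω => L ω k m) (fun ω => L ω k n) μ)
    (hmean : ∀ k m, k ≠ m → ∫ ω, L ω k m ∂μ = 0) (m n : ι) :
    ∫ ω, ((L ω)ᵀ * L ω) m n ∂μ = if m = n then ∑ k, ∫ ω, L ω k m ^ 2 ∂μ else 0 := by
  have hcross : ∀ k, m ≠ n → ∫ ω, L ω k m * L ω k n ∂μ = 0 := by
    intro k hmn
    have hprod : ∫ ω, L ω k m * L ω k n ∂μ = (∫ ω, L ω k m ∂μ) * ∫ ω, L ω k n ∂μ :=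
      (hindep k m n hmn).integral_mul_eq_mul_integral (hL2 k m).1 (hL2 k n).1
    rcases eq_or_ne k m with rfl | hkm
    · rw [hprod, hmean k n hmn, mul_zero]
    · rw [hprod, hmean k m hkm, zero_mul]
  simp only [Matrix.mul_apply, Matrix.transpose_apply]
  have hint : ∀ k, Integrable (fun ω => L ω k m * L ω k n) μ := fun k =>
    (hL2 k m).integrable_mul (hL2 k n)
  rw [integral_finsetSum _ fun k _ => hint k]
  split_ifs with hmn
  · subst hmn
    simp only [sq]
  · exact sum_eq_zero fun k _ => hcross k hmn

end TransposeMulSelf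

section Germ

variable {Ω : Type*} [MeasurableSpace Ω] {μ : Measure Ω} {d : ℕ} {σ : ℝ}
  {h : Fin d → ℝ → ℝ} {k m : Fin d}

/-- `L_{km} = germEntry σ h k m (G_{km})`; below the diagonal this is `0`, whatever `G_{km}`. -/
noncomputable def germEntry (σ : ℝ) (h : Fin d → ℝ → ℝ) (k m : Fin d) (x : ℝ) : ℝ :=
  if k < m then σ * x else if k = m then σ * √(2 * h k x) else 0

lemma germEntry_of_lt (hmk : m < k) : germEntry σ h k m = fun _ => 0 := by
  funext x
  simp [germEntry, hmk.not_gt, hmk.ne']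

lemma measurable_germEntry (hh : Measurable (h k)) : Measurable (germEntry σ h k m) := by
  unfold germEntry
  split_ifs <;> fun_prop

lemma germEntry_sq {x : ℝ} (hh0 : 0 ≤ h k x) : germEntry σ h k m x ^ 2 =
    if k < m then σ ^ 2 * x ^ 2 else if k = m then 2 * σ ^ 2 * h k x else 0 := by
  unfold germEntry
  split_ifs
  · ring
  · rw [mul_pow, Real.sq_sqrt (by positivity)]
    ring
  · ring

lemma integrable_comp_of_le_add_sq [IsFiniteMeasure μ] {f : ℝ → ℝ} {X : Ω → ℝ} {c : ℝ}
    (hf : Measurable f) (hf0 : ∀ b, 0 ≤ f b) (hfle : ∀ b, f b ≤ c + b ^ 2)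
    (hX : MemLp X 2 μ) : Integrable (fun ω => f (X ω)) μ := by
  refine ((integrable_const c).add hX.integrable_sq).mono'
    (hf.comp_aemeasurable hX.1.aemeasurable).aestronglyMeasurable (ae_of_all _ fun ω => ?_)
  rw [Real.norm_eq_abs, abs_of_nonneg (hf0 _)]
  exact hfle _

lemma memLp_germEntry_comp [IsFiniteMeasure μ] {X : Ω → ℝ} {c : ℝ} (hX : MemLp X 2 μ)
    (hh : Measurable (h k)) (hh0 : ∀ b, 0 ≤ h k b) (hhle : ∀ b, h k b ≤ c + b ^ 2) :
    MemLp (fun ω => germEntry σ h k m (X ω)) 2 μ := by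
  refine (memLp_two_iff_integrable_sq ((measurable_germEntry hh).comp_aemeasurable
    hX.1.aemeasurable).aestronglyMeasurable).2 ?_
  simp only [Function.comp_apply, germEntry_sq (hh0 _)]
  split_ifs
  · exact hX.integrable_sq.const_mul _
  · exact (integrable_comp_of_le_add_sq hh hh0 hhle hX).const_mul _
  · exact integrable_zero _ _ _

lemma integral_germEntry_comp_eq_zero {X : Ω → ℝ} (hX : ∫ ω, X ω ∂μ = 0) (hkm : k ≠ m) :
    ∫ ω, germEntry σ h k m (X ω) ∂μ = 0 := by
  rcases hkm.lt_or_gt with hkm | hmk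
  · simp [germEntry, hkm, integral_const_mul, hX]
  · simp [germEntry_of_lt hmk]

lemma integral_germEntry_comp_sq {X : Ω → ℝ} (hh0 : ∀ b, 0 ≤ h k b) :
    ∫ ω, germEntry σ h k m (X ω) ^ 2 ∂μ = if k < m then σ ^ 2 * ∫ ω, X ω ^ 2 ∂μ
      else if k = m then 2 * σ ^ 2 * ∫ ω, h k (X ω) ∂μ else 0 := by
  simp_rw [germEntry_sq (hh0 _)]
  split_ifs <;> simp [integral_const_mul]

lemma sum_ite_lt_ite_eq {R : Type*} [AddCommMonoid R] (a b : R) (m : Fin d) :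
    ∑ k, (if k < m then a else if k = m then b else 0) = (m : ℕ) • a + b := by
  have hsplit : ∀ k : Fin d, (if k < m then a else if k = m then b else 0) =
      (if k < m then a else 0) + if k = m then b else 0 := by
    intro k
    rcases lt_trichotomy k m with hk | rfl | hk
    · simp [hk, hk.ne]
    · simp
    · simp [hk.not_gt, hk.ne']
  simp_rw [hsplit, sum_add_distrib, sum_ite_eq', mem_univ, if_true, ← sum_filter, sum_const]
  rw [filter_gt_eq_Iio, Fin.card_Iio]

end Germ
section GermMatrix

variable {Ω : Type*} [MeasurableSpace Ω] {μ : Measure Ω} {d : ℕ} {σ : ℝ}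
  {G : Fin d → Fin d → Ω → ℝ} {h : Fin d → ℝ → ℝ} {L : Ω → Matrix (Fin d) (Fin d) ℝ}

lemma indepFun_germ_row [IsProbabilityMeasure μ]
    (hGindep : iIndepFun (fun p : {p : Fin d × Fin d // p.1 ≤ p.2} => G p.1.1 p.1.2) μ)
    (hh : ∀ k, Measurable (h k)) (hLG : ∀ ω k m, L ω k m = germEntry σ h k m (G k m ω))
    {k m n : Fin d} (hmn : m ≠ n) :
    IndepFun (fun ω => L ω k m) (fun ω => L ω k n) μ := by
  simp only [hLG]
  rcases lt_or_ge m k with hmk | hkm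
  · simpa only [germEntry_of_lt hmk] using indepFun_const_left 0 _
  rcases lt_or_ge n k with hnk | hkn
  · simpa only [germEntry_of_lt hnk] using indepFun_const_right _ 0
  have hGkmn : IndepFun (G k m) (G k n) μ :=
    hGindep.indepFun (i := ⟨(k, m), hkm⟩) (j := ⟨(k, n), hkn⟩)
      (by simpa [Subtype.ext_iff] using hmn)
  exact hGkmn.comp (measurable_germEntry (hh k)) (measurable_germEntry (hh k))

lemma sum_integral_germ_sq (hh0 : ∀ k b, 0 ≤ h k b) (hGvar : ∀ k m, ∫ ω, G k m ω ^ 2 ∂μ = 1)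
    (hLG : ∀ ω k m, L ω k m = germEntry σ h k m (G k m ω)) (m : Fin d) :
    ∑ k, ∫ ω, L ω k m ^ 2 ∂μ = m * σ ^ 2 + 2 * σ ^ 2 * ∫ ω, h m (G m m ω) ∂μ := by
  calc ∑ k, ∫ ω, L ω k m ^ 2 ∂μ
      = ∑ k, (if k < m then σ ^ 2 else if k = m then 2 * σ ^ 2 * ∫ ω, h m (G m m ω) ∂μ
          else 0) := by
        refine sum_congr rfl fun k _ => ?_
        simp only [hLG]
        rw [integral_germEntry_comp_sq (hh0 k)]
        split_ifs with hkm hkm'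
        · rw [hGvar, mul_one]
        · subst hkm'
          rfl
        · rfl
    _ = m * σ ^ 2 + 2 * σ ^ 2 * ∫ ω, h m (G m m ω) ∂μ := by
        rw [sum_ite_lt_ite_eq, nsmul_eq_mul]

end GermMatrix

theorem mean_CtC_eq_id_general {Ω : Type*} [MeasurableSpace Ω] (μ : Measure Ω)
    [IsProbabilityMeasure μ]
    (δ : ℝ) (hδ : δ ∈ Set.Ioo 0 (Real.sqrt (7 / 11)))
    (σ : ℝ) (hσ : σ = δ / Real.sqrt 7)
    (α : Fin 6 → ℝ) (hα : ∀ m : Fin 6, α m = 1 / (2 * σ ^ 2) + (1 - ((m : ℝ) + 1)) / 2)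
    (G : Fin 6 → Fin 6 → Ω → ℝ)
    (hGindep : iIndepFun
      (fun p : {p : Fin 6 × Fin 6 // p.1 ≤ p.2} => G p.1.1 p.1.2) μ)
    (hGL2 : ∀ m n, MemLp (G m n) 2 μ)
    (hGmean : ∀ m n, ∫ ω, G m n ω ∂μ = 0)
    (hGvar : ∀ m n, ∫ ω, (G m n ω) ^ 2 ∂μ = 1)
    (h : Fin 6 → ℝ → ℝ) (hhmeas : ∀ m, Measurable (h m))
    (hh0 : ∀ m b, 0 ≤ h m b) (hhub : ∀ (m : Fin 6) (b : ℝ), h m b ≤ 2 * α m + b ^ 2)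
    (hhmean : ∀ m, ∫ ω, h m (G m m ω) ∂μ = α m)
    (L : Ω → Matrix (Fin 6) (Fin 6) ℝ)
    (hL : ∀ ω, L ω = Matrix.of fun m n =>
      if m < n then σ * G m n ω
      else if m = n then σ * Real.sqrt (2 * h m (G m m ω)) else 0) :
    ∀ m n : Fin 6, (∫ ω, ((L ω)ᵀ * L ω) m n ∂μ) = if m = n then 1 else 0 := by
  have hσ0 : σ ≠ 0 := by
    rw [hσ]
    exact div_ne_zero hδ.1.ne' (by positivity)
  have hLG : ∀ ω k m, L ω k m = germEntry σ h k m (G k m ω) := by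
    intro ω k m
    rw [hL, of_apply, germEntry]
    split_ifs with hkm hkm'
    · rfl
    · subst hkm'
      rfl
    · rfl
  intro m n
  rw [integral_transpose_mul_self_apply L
    (fun k m => by simpa only [hLG] using
      memLp_germEntry_comp (hGL2 k m) (hhmeas k) (hh0 k) (hhub k))
    (fun k m n hmn => indepFun_germ_row hGindep hhmeas hLG hmn)
    (fun k m hkm => by simpa only [hLG] using integral_germEntry_comp_eq_zero (hGmean k m) hkm)]
  split_ifs with hmn
  · subst hmn
    rw [sum_integral_germ_sq hh0 hGvar hLG, hhmean, hα]
    field_simp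
    ring
  · rfl

/-- Key computation of Proposition 1: with `σ = δ/√7`, `α_m = 1/(2σ²) + (1−m)/2`
(`m = 1,…,6`), mutually independent normalized random variables `G_{mn}` (`m ≤ n`),
and measurable `h_m` with `0 ≤ h_m(b) ≤ 2α_m + b²` and `E{h_m(G_{mm})} = α_m`, the
random upper triangular matrix `L` with `L_{mn} = σ G_{mn}` (`m < n`),
`L_{mm} = σ √(2 h_m(G_{mm}))` satisfies `E{Lᵀ L} = I₆`. -/
theorem mean_CtC_eq_id {Ω : Type*} [MeasurableSpace Ω] (μ : Measure Ω)
    [IsProbabilityMeasure μ]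
    (δ : ℝ) (hδ : δ ∈ Set.Ioo 0 (Real.sqrt (7 / 11)))
    (σ : ℝ) (hσ : σ = δ / Real.sqrt 7)
    (α : Fin 6 → ℝ) (hα : ∀ m : Fin 6, α m = 1 / (2 * σ ^ 2) + (1 - ((m : ℝ) + 1)) / 2)
    (G : Fin 6 → Fin 6 → Ω → ℝ)
    (hGmeas : ∀ m n, Measurable (G m n))
    (hGindep : iIndepFun
      (fun p : {p : Fin 6 × Fin 6 // p.1 ≤ p.2} => G p.1.1 p.1.2) μ)
    (hGL2 : ∀ m n, MemLp (G m n) 2 μ)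
    (hGmean : ∀ m n, ∫ ω, G m n ω ∂μ = 0)
    (hGvar : ∀ m n, ∫ ω, (G m n ω) ^ 2 ∂μ = 1)
    (h : Fin 6 → ℝ → ℝ) (hhmeas : ∀ m, Measurable (h m))
    (hh0 : ∀ m b, 0 ≤ h m b) (hhub : ∀ (m : Fin 6) (b : ℝ), h m b ≤ 2 * α m + b ^ 2)
    (hhmean : ∀ m, ∫ ω, h m (G m m ω) ∂μ = α m)
    (L : Ω → Matrix (Fin 6) (Fin 6) ℝ)
    (hL : ∀ ω, L ω = Matrix.of fun m n =>
      if m < n then σ * G m n ω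
      else if m = n then σ * Real.sqrt (2 * h m (G m m ω)) else 0) :
    ∀ m n : Fin 6, (∫ ω, ((L ω)ᵀ * L ω) m n ∂μ) = if m = n then 1 else 0 :=
  mean_CtC_eq_id_general μ δ hδ σ hσ α hα G hGindep hGL2 hGmean hGvar h hhmeas hh0 hhub hhmean L hL
end
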